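/- With notation as in the definition of the 4-simplex Grassmann weight: for any five elements v₁,...,v₅ of degree 1 in an exterior algebra over a field F satisfying Σ_{j=1}^{5} v_j = 0 and Σ_{j=1}^{5} ζ_j v_j = 0 with ζ₁,...,ζ₅ ∈ F pairwise distinct, and for any two choices of 3-element subsets {i,j,k} and {i',j',k'} of {1,...,5} with complements {l,m} and {l',m'} (each written in increasing order), one has sgn(ijklm)·(1/ζ_{lm})·v_i∧v_j∧v_k = sgn(i'j'k'l'm')·(1/ζ_{l'm'})·v_{i'}∧v_{j'}∧v_{k'}, where sgn denotes the sign of the permutation relative to 12345 and ζ_{lm} = ζ_l − ζ_m. -/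

import Mathlib

open ExteriorAlgebra Equiv

/-!
The quantity `w(σ) = sgn σ · (ζ_{σ3} - ζ_{σ4})⁻¹ · v_{σ0} ∧ v_{σ1} ∧ v_{σ2}` makes sense for every
permutation `σ` of the five indices, and it is invariant under adjacent transpositions, hence
constant. A transposition inside `{0, 1, 2}` or `{3, 4}` flips the sign of `σ` and of exactly one
of the other two factors. For the transposition of `2` and `3`, wedging
`∑ (ζ_t - ζ_{σ4}) v_t = 0` with `v_{σ0} ∧ v_{σ1}` leaves only the terms `t = σ2, σ3`:
`(ζ_{σ2} - ζ_{σ4}) v_{σ0} ∧ v_{σ1} ∧ v_{σ2} + (ζ_{σ3} - ζ_{σ4}) v_{σ0} ∧ v_{σ1} ∧ v_{σ3} = 0`.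
-/

theorem Equiv.Perm.apply_eq_of_forall_mul_swap_castSucc_succ {n : ℕ} {α : Type*}
    (f : Perm (Fin (n + 1)) → α)
    (hf : ∀ σ (i : Fin n), f (σ * swap i.castSucc i.succ) = f σ) (σ τ : Perm (Fin (n + 1))) :
    f σ = f τ := by
  have h_mul : ∀ τ ρ, f (ρ * τ) = f ρ := fun τ => by
    have hτ := (Perm.mclosure_swap_castSucc_succ n).ge (Submonoid.mem_top τ)
    induction hτ using Submonoid.closure_induction with
    | mem _ hτ => obtain ⟨i, rfl⟩ := hτ; exact fun ρ => hf ρ i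
    | one => simp
    | mul a b _ _ ha hb => intro ρ; rw [← mul_assoc, hb, ha]
  simpa using (h_mul σ 1).trans (h_mul τ 1).symm

theorem sum_sub_smul_eq_zero {ι R M : Type*} [Fintype ι] [Ring R] [AddCommGroup M] [Module R M]
    {ζ : ι → R} {v : ι → M} (hsum : ∑ j, v j = 0) (hzsum : ∑ j, ζ j • v j = 0) (c : R) :
    ∑ j, (ζ j - c) • v j = 0 := by
  simp [sub_smul, Finset.sum_sub_distrib, ← Finset.smul_sum, hsum, hzsum]

theorem inv_smul_eq_neg_inv_smul_of_smul_add_smul_eq_zero {K W : Type*} [Field K]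
    [AddCommGroup W] [Module K W] {a b : K} {x y : W} (ha : a ≠ 0) (hb : b ≠ 0)
    (h : a • x + b • y = 0) : b⁻¹ • x = -(a⁻¹ • y) := by
  rw [eq_neg_iff_add_eq_zero]
  calc b⁻¹ • x + a⁻¹ • y = (a * b)⁻¹ • (a • x + b • y) := by
        rw [smul_add, smul_smul, smul_smul]
        congr 2 <;> field_simp
    _ = 0 := by rw [h, smul_zero]

namespace ExteriorAlgebra

variable {R M : Type*} [CommRing R] [AddCommGroup M] [Module R M]

theorem ι_mul_ι_anticomm (x y : M) : ι R x * ι R y = -(ι R y * ι R x) :=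
  eq_neg_of_add_eq_zero_left (ι_add_mul_swap x y)

theorem mul_ι_mul_ι_self (a : ExteriorAlgebra R M) (x : M) : a * ι R x * ι R x = 0 := by
  rw [mul_assoc, ι_sq_zero, mul_zero]

theorem ι_mul_ι_mul_ι_self_left (x y : M) : ι R x * ι R y * ι R x = 0 := by
  rw [ι_mul_ι_anticomm x y, neg_mul, mul_ι_mul_ι_self, neg_zero]

theorem sum_smul_mul_ι_eq_zero {ι' : Type*} [Fintype ι'] {c : ι' → R} {w : ι' → M}
    (h : ∑ t, c t • w t = 0) (a : ExteriorAlgebra R M) :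
    ∑ t, c t • (a * ι R (w t)) = 0 := by
  simp_rw [← mul_smul_comm, ← Finset.mul_sum, ← map_smul, ← map_sum, h, map_zero, mul_zero]

end ExteriorAlgebra

section NormalizedTripleProduct

variable {F V : Type*} [Field F] [AddCommGroup V] [Module F V] {ζ : Fin 5 → F} {v : Fin 5 → V}

noncomputable def normalizedTripleProduct (ζ : Fin 5 → F) (v : Fin 5 → V) (σ : Perm (Fin 5)) :
    ExteriorAlgebra F V :=
  ((Perm.sign σ : ℤ) : F) • (ζ (σ 3) - ζ (σ 4))⁻¹ • (ι F (v (σ 0)) * ι F (v (σ 1)) * ι F (v (σ 2)))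

theorem smul_ι_mul_ι_mul_ι_add_smul_eq_zero (hsum : ∑ j, v j = 0)
    (hzsum : ∑ j, ζ j • v j = 0) (σ : Perm (Fin 5)) :
    (ζ (σ 2) - ζ (σ 4)) • (ι F (v (σ 0)) * ι F (v (σ 1)) * ι F (v (σ 2)))
      + (ζ (σ 3) - ζ (σ 4)) • (ι F (v (σ 0)) * ι F (v (σ 1)) * ι F (v (σ 3))) = 0 := by
  have h := sum_smul_mul_ι_eq_zero (sum_sub_smul_eq_zero hsum hzsum (ζ (σ 4)))
    (ι F (v (σ 0)) * ι F (v (σ 1)))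
  rwa [← Equiv.sum_comp σ, Fin.sum_univ_five, ι_mul_ι_mul_ι_self_left, mul_ι_mul_ι_self, sub_self,
    zero_smul, smul_zero, smul_zero, zero_add, zero_add, add_zero] at h

theorem inv_smul_ι_mul_ι_mul_ι_exchange (hζ : Function.Injective ζ) (hsum : ∑ j, v j = 0)
    (hzsum : ∑ j, ζ j • v j = 0) (σ : Perm (Fin 5)) :
    (ζ (σ 3) - ζ (σ 4))⁻¹ • (ι F (v (σ 0)) * ι F (v (σ 1)) * ι F (v (σ 2)))
      = -((ζ (σ 2) - ζ (σ 4))⁻¹ • (ι F (v (σ 0)) * ι F (v (σ 1)) * ι F (v (σ 3)))) := by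
  have hne : ∀ {a b : Fin 5}, a ≠ b → ζ (σ a) - ζ (σ b) ≠ 0 := fun hab =>
    sub_ne_zero.mpr fun h => hab (σ.injective (hζ h))
  exact inv_smul_eq_neg_inv_smul_of_smul_add_smul_eq_zero (hne (by decide)) (hne (by decide))
    (smul_ι_mul_ι_mul_ι_add_smul_eq_zero hsum hzsum σ)

variable (ζ v) in
theorem normalizedTripleProduct_mul_swap_zero_one (σ : Perm (Fin 5)) :
    normalizedTripleProduct ζ v (σ * swap 0 1) = normalizedTripleProduct ζ v σ := by
  simp [normalizedTripleProduct, swap_apply_of_ne_of_ne, ι_mul_ι_anticomm (v (σ 1)) (v (σ 0))]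

variable (ζ v) in
theorem normalizedTripleProduct_mul_swap_one_two (σ : Perm (Fin 5)) :
    normalizedTripleProduct ζ v (σ * swap 1 2) = normalizedTripleProduct ζ v σ := by
  simp [normalizedTripleProduct, swap_apply_of_ne_of_ne, mul_assoc,
    ι_mul_ι_anticomm (v (σ 2)) (v (σ 1))]

variable (ζ v) in
theorem normalizedTripleProduct_mul_swap_three_four (σ : Perm (Fin 5)) :
    normalizedTripleProduct ζ v (σ * swap 3 4) = normalizedTripleProduct ζ v σ := by
  have h : (ζ (σ 4) - ζ (σ 3))⁻¹ = -(ζ (σ 3) - ζ (σ 4))⁻¹ := by rw [← inv_neg, neg_sub]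
  simp [normalizedTripleProduct, swap_apply_of_ne_of_ne, h]

theorem normalizedTripleProduct_mul_swap_two_three (hζ : Function.Injective ζ)
    (hsum : ∑ j, v j = 0) (hzsum : ∑ j, ζ j • v j = 0) (σ : Perm (Fin 5)) :
    normalizedTripleProduct ζ v (σ * swap 2 3) = normalizedTripleProduct ζ v σ := by
  simp [normalizedTripleProduct, swap_apply_of_ne_of_ne,
    inv_smul_ι_mul_ι_mul_ι_exchange hζ hsum hzsum σ]

theorem normalizedTripleProduct_mul_swap_castSucc_succ (hζ : Function.Injective ζ)
    (hsum : ∑ j, v j = 0) (hzsum : ∑ j, ζ j • v j = 0) (σ : Perm (Fin 5)) (i : Fin 4) :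
    normalizedTripleProduct ζ v (σ * swap i.castSucc i.succ) = normalizedTripleProduct ζ v σ := by
  fin_cases i
  · exact normalizedTripleProduct_mul_swap_zero_one ζ v σ
  · exact normalizedTripleProduct_mul_swap_one_two ζ v σ
  · exact normalizedTripleProduct_mul_swap_two_three hζ hsum hzsum σ
  · exact normalizedTripleProduct_mul_swap_three_four ζ v σ

theorem normalizedTripleProduct_eq (hζ : Function.Injective ζ) (hsum : ∑ j, v j = 0)
    (hzsum : ∑ j, ζ j • v j = 0) (σ τ : Perm (Fin 5)) :
    normalizedTripleProduct ζ v σ = normalizedTripleProduct ζ v τ :=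
  Perm.apply_eq_of_forall_mul_swap_castSucc_succ _
    (normalizedTripleProduct_mul_swap_castSucc_succ hζ hsum hzsum) σ τ

end NormalizedTripleProduct

theorem triple_products_agree_general (F : Type*) [Field F]
    (ζ : Fin 5 → F) (hζ : Function.Injective ζ)
    (V : Type*) [AddCommGroup V] [Module F V] (v : Fin 5 → V)
    (hsum : ∑ j, v j = 0) (hzsum : ∑ j, ζ j • v j = 0)
    (σ σ' : Equiv.Perm (Fin 5)) :
    ((Equiv.Perm.sign σ : ℤ) : F) •
        (ζ (σ 3) - ζ (σ 4))⁻¹ •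
          (ι F (v (σ 0)) * ι F (v (σ 1)) * ι F (v (σ 2)))
      = ((Equiv.Perm.sign σ' : ℤ) : F) •
          (ζ (σ' 3) - ζ (σ' 4))⁻¹ •
            (ι F (v (σ' 0)) * ι F (v (σ' 1)) * ι F (v (σ' 2))) :=
  normalizedTripleProduct_eq hζ hsum hzsum σ σ'

/-- Abstract form of Remark 3: if five degree-1 elements `v₁,…,v₅` of an exterior algebra
satisfy `Σ v_j = 0` and `Σ ζ_j v_j = 0` with `ζ₁,…,ζ₅` pairwise distinct, then for any two
increasing triples `{i,j,k}`, `{i',j',k'} ⊂ {1,…,5}` with increasingly-ordered complements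
`{l,m}`, `{l',m'}`, one has
`sgn(ijklm)·(1/ζ_{lm})·vᵢ∧vⱼ∧v_k = sgn(i'j'k'l'm')·(1/ζ_{l'm'})·v_{i'}∧v_{j'}∧v_{k'}`.
A triple together with its complement is encoded as a permutation `σ` of `Fin 5`
(`i = σ 0, j = σ 1, k = σ 2, l = σ 3, m = σ 4`) with `σ 0 < σ 1 < σ 2` and `σ 3 < σ 4`. -/
theorem triple_products_agree (F : Type*) [Field F] (hchar : (2 : F) ≠ 0)
    (ζ : Fin 5 → F) (hζ : Function.Injective ζ)
    (V : Type*) [AddCommGroup V] [Module F V] (v : Fin 5 → V)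
    (hsum : ∑ j, v j = 0) (hzsum : ∑ j, ζ j • v j = 0)
    (σ σ' : Equiv.Perm (Fin 5))
    (hσ : σ 0 < σ 1 ∧ σ 1 < σ 2 ∧ σ 3 < σ 4)
    (hσ' : σ' 0 < σ' 1 ∧ σ' 1 < σ' 2 ∧ σ' 3 < σ' 4) :
    ((Equiv.Perm.sign σ : ℤ) : F) •
        (ζ (σ 3) - ζ (σ 4))⁻¹ •
          (ι F (v (σ 0)) * ι F (v (σ 1)) * ι F (v (σ 2)))
      = ((Equiv.Perm.sign σ' : ℤ) : F) •
          (ζ (σ' 3) - ζ (σ' 4))⁻¹ •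
            (ι F (v (σ' 0)) * ι F (v (σ' 1)) * ι F (v (σ' 2))) :=
  triple_products_agree_general F ζ hζ V v hsum hzsum σ σ'
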